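/- arXiv:2101.02651 — 3 statements merged into one kernel-verified Lean document; each statement's English description precedes it below -/
import Mathlib

section
/- With the setup of the previous decomposition, define λ : ℚ(t) × V → V by λ(q, a) = Σᵢ F_{γᵢ}(q · pᵢ) where a = Σᵢ F_{γᵢ}(pᵢ) is the unique decomposition. Then λ makes the additive group of V into a ℚ(t)-vector space; in particular λ(q₁·q₂, a) = λ(q₁, λ(q₂, a)) for all q₁, q₂ ∈ ℚ(t) and a ∈ V. -/
/-- Proposition 3.2: the scalar multiplication `λ(q, a) = Σ_γ F_γ (q · p_γ)`,
defined via the unique decomposition `a = Σ_γ F_γ (p_γ)`, makes the additive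
group of `V` into a `ℚ(t)`-vector space; in particular
`λ(q₁·q₂, a) = λ(q₁, λ(q₂, a))`. -/
theorem stmt_4 {B ι Γ V : Type*} [AddCommGroup V] [Module ℚ V]
    (bV : Module.Basis B ℚ V) (bI : Module.Basis ι ℚ (RatFunc ℚ))
    (f : Γ → ι → B) (hinj : ∀ γ, Function.Injective (f γ))
    (hdisj : ∀ γ η, γ ≠ η → Disjoint (Set.range (f γ)) (Set.range (f η)))
    (hcover : (⋃ γ, Set.range (f γ)) = Set.univ)
    (F : Γ → RatFunc ℚ →ₗ[ℚ] V)
    (hF : ∀ γ, F γ = bI.constr ℚ (fun p => bV (f γ p)))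
    (hrep : ∀ a : V, ∃! c : Γ →₀ RatFunc ℚ, a = c.sum fun γ p => F γ p)
    (lam : RatFunc ℚ → V → V)
    (hlam : ∀ (q : RatFunc ℚ) (c : Γ →₀ RatFunc ℚ),
      lam q (c.sum fun γ p => F γ p) = c.sum fun γ p => F γ (q * p)) :
    (∀ a : V, lam 1 a = a) ∧
    (∀ (q : RatFunc ℚ) (a b : V), lam q (a + b) = lam q a + lam q b) ∧
    (∀ (q₁ q₂ : RatFunc ℚ) (a : V), lam (q₁ + q₂) a = lam q₁ a + lam q₂ a) ∧
    (∀ (q₁ q₂ : RatFunc ℚ) (a : V), lam (q₁ * q₂) a = lam q₁ (lam q₂ a)) := by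
  have hF0 : ∀ γ : Γ, F γ 0 = 0 := fun γ => (F γ).map_zero
  refine ⟨?_, ?_, ?_, ?_⟩
  · intro a
    obtain ⟨c, hc, -⟩ := hrep a
    rw [hc, hlam]
    simp
  · intro q a b
    obtain ⟨c, hc, -⟩ := hrep a
    obtain ⟨d, hd, -⟩ := hrep b
    have hab : a + b = (c + d).sum fun γ p => F γ p := by
      rw [hc, hd, Finsupp.sum_add_index' (fun γ => hF0 γ)
        (fun γ p₁ p₂ => (F γ).map_add p₁ p₂)]
    rw [hab, hlam, hc, hd, hlam, hlam,
      Finsupp.sum_add_index' (fun γ => by simp) (fun γ p₁ p₂ => by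
        rw [mul_add, (F γ).map_add])]
  · intro q₁ q₂ a
    obtain ⟨c, hc, -⟩ := hrep a
    rw [hc, hlam, hlam, hlam, ← Finsupp.sum_add]
    refine Finsupp.sum_congr fun γ _ => ?_
    rw [add_mul, (F γ).map_add]
  · intro q₁ q₂ a
    obtain ⟨c, hc, -⟩ := hrep a
    have h2 : lam q₂ a = (q₂ • c).sum fun γ p => F γ p := by
      rw [hc, hlam, Finsupp.sum_smul_index' (fun γ => hF0 γ)]
      simp [smul_eq_mul]
    rw [h2, hlam, Finsupp.sum_smul_index' (fun γ => by simp), hc, hlam]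
    refine Finsupp.sum_congr fun γ _ => ?_
    rw [smul_eq_mul, ← mul_assoc]
end

section
/- Let M be an ordered divisible abelian group, let A ⊆ M, and let b = (b₁, …, bₙ) ∈ Mⁿ be such that b₁, …, bₙ are ℚ-linearly independent over the ℚ-span of A ∪ {1}. If X ⊆ Mⁿ is defined by a finite conjunction of conditions of the form u₁x₁ + ⋯ + uₙxₙ + a = 0 or u₁x₁ + ⋯ + uₙxₙ + a > 0 (uᵢ ∈ ℚ, a in the ℚ-span of A ∪ {1}) and b ∈ X, then no equality condition with (u₁,…,uₙ) ≠ 0 can occur, and hence X contains an open box around b. -/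
section aux
variable {M : Type*} [AddCommGroup M] [LinearOrder M] [IsOrderedAddMonoid M] [Module ℚ M]
    [TopologicalSpace M] [OrderTopology M]

lemma continuous_qsmul (q : ℚ) : Continuous (fun x : M => q • x) := by
  set d : ℤ := (q.den : ℤ) with hd
  have hdpos : (0:ℤ) < d := by positivity
  have hinv : ∀ x : M, d • (((q.den : ℚ))⁻¹ • x) = x := by
    intro x
    rw [← Int.cast_smul_eq_zsmul ℚ, smul_smul]
    norm_num [hd]
  have hsm : StrictMono (fun x : M => d • x) := zsmul_strictMono_right M hdpos
  have hsurj : Function.Surjective (fun x : M => d • x) := fun x => ⟨_, hinv x⟩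
  let e : M ≃o M := StrictMono.orderIsoOfSurjective _ hsm hsurj
  have hsymm : Continuous (fun x : M => ((q.den : ℚ))⁻¹ • x) := by
    have : (fun x : M => ((q.den : ℚ))⁻¹ • x) = e.symm := by
      funext x
      apply e.injective
      rw [OrderIso.apply_symm_apply]
      exact hinv x
    rw [this]
    exact (e.symm.toHomeomorph).continuous
  have key : (fun x : M => q • x) = (fun x : M => q.num • x) ∘ (fun x : M => ((q.den : ℚ))⁻¹ • x) := by
    funext x
    simp only [Function.comp_apply]
    rw [← Int.cast_smul_eq_zsmul ℚ, smul_smul, ← div_eq_mul_inv, Rat.num_div_den]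
  rw [key]
  exact (continuous_zsmul q.num).comp hsymm

end aux

/-- Quantifier-elimination fact for ordered divisible abelian groups: if `X ⊆ Mⁿ`
is defined by a finite conjunction of conditions `Σ uᵢxᵢ + a = 0` or
`Σ uᵢxᵢ + a > 0` (with `uᵢ ∈ ℚ`, `a` in the ℚ-span of `A ∪ {1}`), and `b ∈ X` has
coordinates ℚ-linearly independent over that span, then no nontrivial equality
condition occurs and `X` contains an open box (indeed an open set) around `b`. -/
theorem stmt_14 {M : Type*} [AddCommGroup M] [LinearOrder M] [IsOrderedAddMonoid M] [Module ℚ M]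
    [TopologicalSpace M] [OrderTopology M]
    (A : Set M) (one : M) (n : ℕ) (b : Fin n → M)
    (hb : ∀ c : Fin n → ℚ, (∑ i, c i • b i) ∈ Submodule.span ℚ (A ∪ {one}) →
      ∀ i, c i = 0)
    (k : ℕ) (u : Fin k → Fin n → ℚ) (a : Fin k → M) (s : Fin k → Bool)
    (ha : ∀ l, a l ∈ Submodule.span ℚ (A ∪ {one}))
    (X : Set (Fin n → M))
    (hX : X = {x | ∀ l, if s l then (∑ i, u l i • x i) + a l = 0
                        else 0 < (∑ i, u l i • x i) + a l})
    (hbX : b ∈ X) :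
    (∀ l, s l = true → u l = 0) ∧
    ∃ U : Set (Fin n → M), IsOpen U ∧ b ∈ U ∧ U ⊆ X := by
  rw [hX] at hbX
  have hzero : ∀ l, s l = true → u l = 0 := by
    intro l hl
    have h := hbX l
    rw [hl] at h
    simp only [if_true] at h
    have hmem : (∑ i, u l i • b i) ∈ Submodule.span ℚ (A ∪ {one}) := by
      have : (∑ i, u l i • b i) = -(a l) := eq_neg_of_add_eq_zero_left h
      rw [this]
      exact neg_mem (ha l)
    funext i
    exact hb (u l) hmem i
  refine ⟨hzero, ?_⟩
  refine ⟨⋂ l, if s l = true then Set.univ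
      else {x : Fin n → M | 0 < (∑ i, u l i • x i) + a l}, ?_, ?_, ?_⟩
  · apply isOpen_iInter_of_finite
    intro l
    by_cases hl : s l = true
    · simp [hl]
    · simp only [hl, if_false]
      have hc : Continuous (fun x : Fin n → M => (∑ i, u l i • x i) + a l) := by
        apply Continuous.add _ continuous_const
        apply continuous_finset_sum
        intro i _
        exact (continuous_qsmul (u l i)).comp (continuous_apply i)
      exact isOpen_lt continuous_const hc
  · apply Set.mem_iInter.mpr
    intro l
    by_cases hl : s l = true
    · simp [hl]
    · have h := hbX l
      simp only [hl, if_false] at h ⊢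
      exact h
  · intro x hx
    rw [hX]
    intro l
    by_cases hl : s l = true
    · rw [hl]
      simp only [if_true]
      have hu := hzero l hl
      have hbl := hbX l
      rw [hl] at hbl
      simp only [if_true, hu] at hbl ⊢
      simp only [Pi.zero_apply, zero_smul, Finset.sum_const_zero, zero_add] at hbl ⊢
      exact hbl
    · have h := Set.mem_iInter.mp hx l
      simp only [hl, if_false] at h ⊢
      exact h
end

section
/- Let λ : ℚ(t) → (ℝ → ℝ) be the scalar multiplication constructed from the family (f_γ), and let 𝟙 denote the element 1 ∈ ℚ(t). Then for pairwise distinct p₁, …, pₙ ∈ I and any nonempty open intervals J₁, …, Jₙ ⊆ ℝ, there exists x ∈ ℝ with λ(pᵢ)(x) ∈ Jᵢ for all i; in particular the image of x ↦ (λ(p₁)(x), …, λ(pₙ)(x)) is dense in ℝⁿ. -/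
/-- Lemma 3.3: with `λ(p)(f_γ(𝟙)) = f_γ(p)` and the placement property of the
family `(f_γ)`, for pairwise distinct basis elements `p₁, …, pₙ ∈ I` and nonempty
open intervals `J₁, …, Jₙ` there is `x ∈ ℝ` with `λ(pᵢ)(x) ∈ Jᵢ`; in particular
the image of `x ↦ (λ(p₁)(x), …, λ(pₙ)(x))` is dense in `ℝⁿ`. -/
theorem stmt_17 {ι Γ : Type*} (bI : Module.Basis ι ℚ (RatFunc ℚ)) (one : ι)
    (hone : bI one = 1)
    (f : Γ → ι → ℝ) (lam : RatFunc ℚ → ℝ → ℝ)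
    (hlam : ∀ (γ : Γ) (q : ι), lam (bI q) (f γ one) = f γ q)
    (hplace : ∀ (n : ℕ) (p : Fin n → ι), Function.Injective p →
      ∀ J : Fin n → Set ℝ, (∀ i, ∃ c d : ℝ, c < d ∧ J i = Set.Ioo c d) →
      ∃ γ : Γ, ∀ i, f γ (p i) ∈ J i) :
    ∀ (n : ℕ) (p : Fin n → ι), Function.Injective p →
      ((∀ J : Fin n → Set ℝ, (∀ i, ∃ c d : ℝ, c < d ∧ J i = Set.Ioo c d) →
        ∃ x : ℝ, ∀ i, lam (bI (p i)) x ∈ J i) ∧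
      Dense {v : Fin n → ℝ | ∃ x : ℝ, ∀ i, v i = lam (bI (p i)) x}) := by
  intro n p hp
  have key : ∀ J : Fin n → Set ℝ, (∀ i, ∃ c d : ℝ, c < d ∧ J i = Set.Ioo c d) →
      ∃ x : ℝ, ∀ i, lam (bI (p i)) x ∈ J i := by
    intro J hJ
    obtain ⟨γ, hγ⟩ := hplace n p hp J hJ
    exact ⟨f γ one, fun i => by rw [hlam γ (p i)]; exact hγ i⟩
  refine ⟨key, ?_⟩
  intro v
  rw [Metric.mem_closure_iff]
  intro ε hε
  obtain ⟨x, hx⟩ := key (fun i => Set.Ioo (v i - ε / 2) (v i + ε / 2))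
    (fun i => ⟨v i - ε / 2, v i + ε / 2, by linarith, rfl⟩)
  refine ⟨fun i => lam (bI (p i)) x, ⟨x, fun i => rfl⟩, ?_⟩
  rcases Nat.eq_zero_or_pos n with h | h
  · subst h; simpa [dist_pi_lt_iff hε] using hε
  · rw [dist_pi_lt_iff hε]
    intro i
    have := hx i
    simp only [Set.mem_Ioo] at this
    rw [Real.dist_eq, abs_lt]
    constructor <;> linarith [this.1, this.2]
end
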